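/- arXiv:1011.2926 — 2 statements merged into one kernel-verified Lean document; each statement's English description precedes it below -/
import Mathlib

section
/- Let C be a category of fibrant objects and D a category with a subcategory of weak equivalences (containing isomorphisms and satisfying two-out-of-three). If a functor F : C → D sends trivial fibrations to weak equivalences, then F sends all weak equivalences to weak equivalences. -/
/-!
Write `f = i ≫ q` with `q` a fibration and `i` a section of a trivial fibration `p`
(Brown's factorization lemma). If `f` is a weak equivalence then so is `q` by two-out-of-three,
so `F q` is a weak equivalence; `F i` is one because `F i ≫ F p = 𝟙` and `F p` is one.
-/

open CategoryTheory CategoryTheory.Limits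

universe v u

/-- A category of fibrant objects in the sense of K. Brown: a category with a terminal
object, equipped with subcategories of fibrations and of weak equivalences, such that
fibrations are closed under composition, contain isomorphisms, are stable under pullback
(pullbacks of fibrations exist), every map to the terminal object is a fibration, weak
equivalences contain isomorphisms and satisfy two-out-of-three, trivial fibrations are
stable under pullback, and every object has a path object. -/
structure FibrantCategory (C : Type u) [Category.{v} C] [HasBinaryProducts C] where
  /-- fibrations -/
  Fib : MorphismProperty C
  /-- weak equivalences -/
  Weq : MorphismProperty C
  /-- the terminal object -/
  term : C
  isTerminal : IsTerminal term
  fib_comp : ∀ {A B D : C} (f : A ⟶ B) (g : B ⟶ D), Fib f → Fib g → Fib (f ≫ g)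
  fib_iso : ∀ {A B : C} (f : A ⟶ B) [IsIso f], Fib f
  weq_iso : ∀ {A B : C} (f : A ⟶ B) [IsIso f], Weq f
  weq_comp : ∀ {A B D : C} (f : A ⟶ B) (g : B ⟶ D), Weq f → Weq g → Weq (f ≫ g)
  weq_of_comp_left : ∀ {A B D : C} (f : A ⟶ B) (g : B ⟶ D), Weq g → Weq (f ≫ g) → Weq f
  weq_of_comp_right : ∀ {A B D : C} (f : A ⟶ B) (g : B ⟶ D), Weq f → Weq (f ≫ g) → Weq g
  fib_term : ∀ A : C, Fib (isTerminal.from A)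
  hasPullback_of_fib : ∀ {A B E : C} (f : A ⟶ B) (p : E ⟶ B), Fib p → HasPullback f p
  fib_pullback : ∀ {A B E : C} (f : A ⟶ B) (p : E ⟶ B) [HasPullback f p],
    Fib p → Fib (pullback.fst f p)
  trivFib_pullback : ∀ {A B E : C} (f : A ⟶ B) (p : E ⟶ B) [HasPullback f p],
    Fib p → Weq p → Fib (pullback.fst f p) ∧ Weq (pullback.fst f p)
  path : ∀ B : C, ∃ (PI : C) (s : B ⟶ PI) (d₀ d₁ : PI ⟶ B),
    Weq s ∧ Fib (prod.lift d₀ d₁) ∧ s ≫ d₀ = 𝟙 B ∧ s ≫ d₁ = 𝟙 B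

namespace FibrantCategory

variable {C : Type u} [Category.{v} C] [HasBinaryProducts C] (FC : FibrantCategory C)

lemma fib_of_isPullback {P A B E : C} {fst : P ⟶ A} {snd : P ⟶ E} {f : A ⟶ B} {p : E ⟶ B}
    (h : IsPullback fst snd f p) (hp : FC.Fib p) : FC.Fib fst := by
  have := FC.hasPullback_of_fib f p hp
  rw [← h.isoPullback_hom_fst]
  exact FC.fib_comp _ _ (FC.fib_iso _) (FC.fib_pullback f p hp)

lemma weq_of_isPullback {P A B E : C} {fst : P ⟶ A} {snd : P ⟶ E} {f : A ⟶ B} {p : E ⟶ B}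
    (h : IsPullback fst snd f p) (hp : FC.Fib p) (hp' : FC.Weq p) : FC.Weq fst := by
  have := FC.hasPullback_of_fib f p hp
  rw [← h.isoPullback_hom_fst]
  exact FC.weq_comp _ _ (FC.weq_iso _) (FC.trivFib_pullback f p hp hp').2

lemma fib_prod_fst (A B : C) : FC.Fib (prod.fst : A ⨯ B ⟶ A) :=
  FC.fib_of_isPullback (IsPullback.of_is_product (prodIsProd A B) FC.isTerminal) (FC.fib_term B)

lemma fib_prod_snd (A B : C) : FC.Fib (prod.snd : A ⨯ B ⟶ B) :=
  FC.fib_of_isPullback (IsPullback.of_is_product (prodIsProd A B) FC.isTerminal).flip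
    (FC.fib_term A)

lemma weq_of_comp_eq_id {A B : C} {i : A ⟶ B} {p : B ⟶ A} (hip : i ≫ p = 𝟙 A) (hp : FC.Weq p) :
    FC.Weq i :=
  FC.weq_of_comp_left i p hp (hip ▸ FC.weq_iso _)

/-- Brown's factorization lemma: `f` factors through the mapping path space
`X ×_Y PY ≅ (X ⨯ Y) ×_{Y ⨯ Y} PY`. -/
theorem exists_factorization {X Y : C} (f : X ⟶ Y) :
    ∃ (E : C) (i : X ⟶ E) (p : E ⟶ X) (q : E ⟶ Y),
      FC.Fib p ∧ FC.Weq p ∧ i ≫ p = 𝟙 X ∧ FC.Fib q ∧ i ≫ q = f := by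
  obtain ⟨PY, s, d₀, d₁, hs, hd, hsd₀, hsd₁⟩ := FC.path Y
  have hd₀_fib : FC.Fib d₀ := prod.lift_fst d₀ d₁ ▸ FC.fib_comp _ _ hd (FC.fib_prod_fst Y Y)
  have hd₀_weq : FC.Weq d₀ := FC.weq_of_comp_right s d₀ hs (hsd₀ ▸ FC.weq_iso _)
  have := FC.hasPullback_of_fib (prod.map f (𝟙 Y)) (prod.lift d₀ d₁) hd
  have hE : IsPullback (pullback.fst (prod.map f (𝟙 Y)) (prod.lift d₀ d₁) ≫ prod.fst)
      (pullback.snd _ _) f d₀ := by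
    simpa only [prod.lift_fst] using
      (IsPullback.of_hasPullback (prod.map f (𝟙 Y)) (prod.lift d₀ d₁)).paste_horiz
        (IsPullback.of_prod_fst_with_id f Y)
  refine ⟨pullback (prod.map f (𝟙 Y)) (prod.lift d₀ d₁),
    pullback.lift (prod.lift (𝟙 X) f) (f ≫ s) (by ext <;> simp [hsd₀, hsd₁]),
    pullback.fst _ _ ≫ prod.fst, pullback.fst _ _ ≫ prod.snd,
    FC.fib_of_isPullback hE hd₀_fib, FC.weq_of_isPullback hE hd₀_fib hd₀_weq,
    by rw [pullback.lift_fst_assoc, prod.lift_fst],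
    FC.fib_comp _ _ (FC.fib_pullback _ _ hd) (FC.fib_prod_snd X Y),
    by rw [pullback.lift_fst_assoc, prod.lift_snd]⟩

end FibrantCategory

theorem functor_preserves_weq_general {C : Type u} [Category.{v} C] [HasBinaryProducts C]
    (FC : FibrantCategory C) {D : Type*} [Category D] (WD : MorphismProperty D)
    (WD_iso : ∀ {X Y : D} (f : X ⟶ Y) [IsIso f], WD f)
    (WD_comp : ∀ {X Y Z : D} (f : X ⟶ Y) (g : Y ⟶ Z), WD f → WD g → WD (f ≫ g))
    (WD_of_comp_left : ∀ {X Y Z : D} (f : X ⟶ Y) (g : Y ⟶ Z), WD g → WD (f ≫ g) → WD f)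
    (F : C ⥤ D)
    (hF : ∀ {X Y : C} (f : X ⟶ Y), FC.Fib f → FC.Weq f → WD (F.map f)) :
    ∀ {X Y : C} (f : X ⟶ Y), FC.Weq f → WD (F.map f) := by
  intro X Y f hf
  obtain ⟨E, i, p, q, hp_fib, hp_weq, hip, hq_fib, hiq⟩ := FC.exists_factorization f
  have hq_weq : FC.Weq q :=
    FC.weq_of_comp_right i q (FC.weq_of_comp_eq_id hip hp_weq) (hiq ▸ hf)
  have hFi : WD (F.map i) :=
    WD_of_comp_left _ _ (hF p hp_fib hp_weq) (by rw [← F.map_comp, hip, F.map_id]; exact WD_iso _)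
  rw [← hiq, F.map_comp]
  exact WD_comp _ _ hFi (hF q hq_fib hq_weq)

/-- If a functor from a category of fibrant objects to a category with weak equivalences
sends trivial fibrations to weak equivalences, then it sends all weak equivalences to
weak equivalences. -/
theorem functor_preserves_weq {C : Type u} [Category.{v} C] [HasBinaryProducts C]
    (FC : FibrantCategory C) {D : Type*} [Category D] (WD : MorphismProperty D)
    (WD_iso : ∀ {X Y : D} (f : X ⟶ Y) [IsIso f], WD f)
    (WD_comp : ∀ {X Y Z : D} (f : X ⟶ Y) (g : Y ⟶ Z), WD f → WD g → WD (f ≫ g))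
    (WD_of_comp_left : ∀ {X Y Z : D} (f : X ⟶ Y) (g : Y ⟶ Z), WD g → WD (f ≫ g) → WD f)
    (WD_of_comp_right : ∀ {X Y Z : D} (f : X ⟶ Y) (g : Y ⟶ Z), WD f → WD (f ≫ g) → WD g)
    (F : C ⥤ D)
    (hF : ∀ {X Y : C} (f : X ⟶ Y), FC.Fib f → FC.Weq f → WD (F.map f)) :
    ∀ {X Y : C} (f : X ⟶ Y), FC.Weq f → WD (F.map f) :=
  functor_preserves_weq_general FC WD WD_iso WD_comp WD_of_comp_left F hF
end

section
/- In a pointed category of fibrant objects, if p : E → B is a fibration with fibre F (the pullback of p along the zero object's map * → B), then the canonical map from F to the homotopy fibre of p (the fibre of the fibration Np → B from the mapping path-object factorization) is a weak equivalence. -/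
/-!
The map `a = (𝟙, p ≫ s) : E ⟶ E ×_B B^I` is a weak equivalence over `B` between the fibrations
`p` and `p'`, and `F ⟶ HF` is its base change along `* ⟶ B`. Such base changes are weak
equivalences (Brown): factor `a` over `B` as a section of a trivial fibration followed by a
trivial fibration, both of which stay trivial fibrations after base change, and a section of a
weak equivalence is a weak equivalence.
-/

open CategoryTheory CategoryTheory.Limits

universe v u

namespace FibrantCategory

variable {C : Type u} [Category.{v} C] [HasBinaryProducts C] (FC : FibrantCategory C)

lemma fib_of_isPullback_s2 {P X Y Z : C} {h : P ⟶ X} {k : P ⟶ Y} {f : X ⟶ Z} {g : Y ⟶ Z}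
    (sq : IsPullback h k f g) (hg : FC.Fib g) : FC.Fib h := by
  have := FC.hasPullback_of_fib f g hg
  rw [← sq.isoPullback_hom_fst]
  exact FC.fib_comp _ _ (FC.fib_iso _) (FC.fib_pullback f g hg)

lemma weq_of_isPullback_s2 {P X Y Z : C} {h : P ⟶ X} {k : P ⟶ Y} {f : X ⟶ Z} {g : Y ⟶ Z}
    (sq : IsPullback h k f g) (hg : FC.Fib g) (hg' : FC.Weq g) : FC.Weq h := by
  have := FC.hasPullback_of_fib f g hg
  rw [← sq.isoPullback_hom_fst]
  exact FC.weq_comp _ _ (FC.weq_iso _) (FC.trivFib_pullback f g hg hg').2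

lemma weq_of_comp_eq_id_of_weq_right {X Y : C} {σ : X ⟶ Y} {r : Y ⟶ X} (h : σ ≫ r = 𝟙 X)
    (hr : FC.Weq r) : FC.Weq σ :=
  FC.weq_of_comp_left σ r hr (h ▸ FC.weq_iso _)

lemma weq_of_comp_eq_id_of_weq_left {X Y : C} {σ : X ⟶ Y} {r : Y ⟶ X} (h : σ ≫ r = 𝟙 X)
    (hσ : FC.Weq σ) : FC.Weq r :=
  FC.weq_of_comp_right σ r hσ (h ▸ FC.weq_iso _)

lemma fib_prod_fst_s2 (X Y : C) : FC.Fib (prod.fst : X ⨯ Y ⟶ X) :=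
  FC.fib_of_isPullback_s2 (IsPullback.of_is_product' (prodIsProd X Y) FC.isTerminal)
    (FC.fib_term Y)

lemma fib_prod_snd_s2 (X Y : C) : FC.Fib (prod.snd : X ⨯ Y ⟶ Y) :=
  FC.fib_of_isPullback_s2 (IsPullback.of_is_product' (prodIsProd X Y) FC.isTerminal).flip
    (FC.fib_term X)

section PathObject

variable {X Y PI : C} {s : Y ⟶ PI} {d₀ d₁ : PI ⟶ Y}

lemma fib_of_fib_prodLift_left (hd : FC.Fib (prod.lift d₀ d₁)) : FC.Fib d₀ :=
  prod.lift_fst d₀ d₁ ▸ FC.fib_comp _ _ hd (FC.fib_prod_fst_s2 Y Y)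

lemma weq_pullbackLift_id_comp (f : X ⟶ Y) (hs : FC.Weq s) (hd : FC.Fib (prod.lift d₀ d₁))
    (hs₀ : s ≫ d₀ = 𝟙 Y) [HasPullback f d₀] :
    FC.Weq (pullback.lift (f := f) (g := d₀) (𝟙 X) (f ≫ s) (by simp [hs₀])) := by
  have hd₀ : FC.Weq d₀ := FC.weq_of_comp_eq_id_of_weq_left hs₀ hs
  exact FC.weq_of_comp_eq_id_of_weq_right (pullback.lift_fst _ _ _)
    (FC.weq_of_isPullback_s2 (IsPullback.of_hasPullback f d₀) (FC.fib_of_fib_prodLift_left hd) hd₀)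

/-- `(fst, snd ≫ d₁) : X ×_Y Y^I ⟶ X × Y` is the pullback of `(d₀, d₁)` along `f × 𝟙`. -/
lemma fib_pullbackSnd_comp (f : X ⟶ Y) (hd : FC.Fib (prod.lift d₀ d₁)) [HasPullback f d₀] :
    FC.Fib (pullback.snd f d₀ ≫ d₁) := by
  have sq : IsPullback (prod.lift (pullback.fst f d₀) (pullback.snd f d₀ ≫ d₁))
      (pullback.snd f d₀) (prod.map f (𝟙 Y)) (prod.lift d₀ d₁) :=
    (IsPullback.of_bot
      (by rw [prod.lift_fst, prod.lift_fst]; exact (IsPullback.of_hasPullback f d₀).flip)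
      (by ext <;> simp [pullback.condition]) (IsPullback.of_prod_fst_with_id f Y).flip).flip
  rw [← prod.lift_snd (pullback.fst f d₀) (pullback.snd f d₀ ≫ d₁)]
  exact FC.fib_comp _ _ (FC.fib_of_isPullback_s2 sq hd) (FC.fib_prod_snd_s2 X Y)

end PathObject

theorem exists_weq_fib_factorization {X Y : C} (f : X ⟶ Y) :
    ∃ (N : C) (σ : X ⟶ N) (φ : N ⟶ Y), FC.Weq σ ∧ FC.Fib φ ∧ σ ≫ φ = f := by
  obtain ⟨PI, s, d₀, d₁, hs, hd, hs₀, hs₁⟩ := FC.path Y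
  have := FC.hasPullback_of_fib f d₀ (FC.fib_of_fib_prodLift_left hd)
  exact ⟨_, _, _, FC.weq_pullbackLift_id_comp f hs hd hs₀, FC.fib_pullbackSnd_comp f hd,
    by rw [pullback.lift_snd_assoc, Category.assoc, hs₁, Category.comp_id]⟩

/-- Factor the graph `X ⟶ X ×_B Y` and project to both factors. -/
theorem exists_factorization_over {X Y B : C} {πX : X ⟶ B} {πY : Y ⟶ B} (hX : FC.Fib πX)
    (hY : FC.Fib πY) {f : X ⟶ Y} (hf : FC.Weq f) (hfπ : f ≫ πY = πX) :
    ∃ (N : C) (σ : X ⟶ N) (r : N ⟶ X) (q : N ⟶ Y), σ ≫ r = 𝟙 X ∧ σ ≫ q = f ∧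
      r ≫ πX = q ≫ πY ∧ FC.Fib r ∧ FC.Weq r ∧ FC.Fib q ∧ FC.Weq q := by
  have := FC.hasPullback_of_fib πX πY hY
  obtain ⟨N, σ, φ, hσ, hφ, hσφ⟩ := FC.exists_weq_fib_factorization
    (pullback.lift (𝟙 X) f (by rw [hfπ, Category.id_comp]) : X ⟶ pullback πX πY)
  have hσr : σ ≫ φ ≫ pullback.fst πX πY = 𝟙 X := by rw [reassoc_of% hσφ, pullback.lift_fst]
  have hσq : σ ≫ φ ≫ pullback.snd πX πY = f := by rw [reassoc_of% hσφ, pullback.lift_snd]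
  refine ⟨N, σ, φ ≫ pullback.fst πX πY, φ ≫ pullback.snd πX πY, hσr, hσq,
    by simp only [Category.assoc, pullback.condition],
    FC.fib_comp _ _ hφ (FC.fib_pullback πX πY hY), FC.weq_of_comp_eq_id_of_weq_left hσr hσ,
    FC.fib_comp _ _ hφ (FC.fib_of_isPullback_s2 (IsPullback.of_hasPullback πX πY).flip hX),
    FC.weq_of_comp_right σ _ hσ (hσq ▸ hf)⟩

theorem weq_of_isPullback_of_weq_over {X Y B A F G : C} {πX : X ⟶ B} {πY : Y ⟶ B}
    (hX : FC.Fib πX) (hY : FC.Fib πY) {f : X ⟶ Y} (hf : FC.Weq f) (hfπ : f ≫ πY = πX)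
    {g : A ⟶ B} {iX : F ⟶ X} {tX : F ⟶ A} (sqX : IsPullback iX tX πX g)
    {iY : G ⟶ Y} {tY : G ⟶ A} (sqY : IsPullback iY tY πY g)
    {u : F ⟶ G} (hu : u ≫ iY = iX ≫ f) (hut : u ≫ tY = tX) : FC.Weq u := by
  obtain ⟨N, σ, r, q, hσr, hσq, hrq, hrf, hrw, hqf, hqw⟩ :=
    FC.exists_factorization_over hX hY hf hfπ
  have := FC.hasPullback_of_fib iY q hqf
  -- `P = G ×_Y N` is also `F ×_X N`, by pasting over `A ×_B -`.
  have hw : (pullback.snd iY q ≫ r) ≫ πX = (pullback.fst iY q ≫ tY) ≫ g := by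
    rw [Category.assoc, hrq, ← pullback.condition_assoc, Category.assoc, sqY.w]
  let w : pullback iY q ⟶ F := sqX.lift _ _ hw
  have sqP : IsPullback (pullback.snd iY q) w r iX := by
    refine IsPullback.of_bot ?_ (sqX.lift_fst _ _ hw).symm sqX
    rw [sqX.lift_snd, hrq]
    exact (IsPullback.of_hasPullback iY q).flip.paste_vert sqY
  let v : F ⟶ pullback iY q := pullback.lift u (iX ≫ σ) (by rw [hu, Category.assoc, hσq])
  have hvw : v ≫ w = 𝟙 F := by
    apply sqX.hom_ext
    · rw [Category.assoc, sqX.lift_fst, pullback.lift_snd_assoc, Category.assoc, hσr,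
        Category.comp_id, Category.id_comp]
    · rw [Category.assoc, sqX.lift_snd, pullback.lift_fst_assoc, hut, Category.id_comp]
  have hv : FC.Weq v :=
    FC.weq_of_comp_eq_id_of_weq_right hvw (FC.weq_of_isPullback_s2 sqP.flip hrf hrw)
  have hvu : v ≫ pullback.fst iY q = u := pullback.lift_fst _ _ _
  rw [← hvu]
  exact FC.weq_comp _ _ hv (FC.weq_of_isPullback_s2 (IsPullback.of_hasPullback iY q) hqf hqw)

end FibrantCategory

/-- In a pointed category of fibrant objects (terminal object is also initial), given a
fibration `p : E ⟶ B` with fibre `F` (the pullback of `p` along `* ⟶ B`), and given the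
mapping path object `Np = E ×_B B^I` with its fibration `p' = snd ≫ d₁ : Np ⟶ B` whose fibre
`HF` is the homotopy fibre of `p`, the canonical map `F ⟶ HF` (characterized by its two
components into the pullback `Np`) is a weak equivalence. -/
theorem fibre_weq_homotopyFibre {C : Type u} [Category.{v} C] [HasBinaryProducts C]
    (FC : FibrantCategory C) (hInit : IsInitial FC.term)
    {E B : C} (p : E ⟶ B) (hp : FC.Fib p)
    -- a path object for B
    (PI : C) (s : B ⟶ PI) (d₀ d₁ : PI ⟶ B)
    (hs : FC.Weq s) (hd : FC.Fib (prod.lift d₀ d₁)) (hs₀ : s ≫ d₀ = 𝟙 B) (hs₁ : s ≫ d₁ = 𝟙 B)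
    [HasPullback p d₀]
    -- the fibre F of p
    {F : C} (i : F ⟶ E) (hw : i ≫ p = FC.isTerminal.from F ≫ hInit.to B)
    (hlim : Nonempty (IsLimit (PullbackCone.mk i (FC.isTerminal.from F) hw)))
    -- the homotopy fibre HF of p: the fibre of p' = snd ≫ d₁ : Np ⟶ B
    {HF : C} (j : HF ⟶ pullback p d₀)
    (hw' : j ≫ (pullback.snd p d₀ ≫ d₁) = FC.isTerminal.from HF ≫ hInit.to B)
    (hlim' : Nonempty (IsLimit (PullbackCone.mk j (FC.isTerminal.from HF) hw'))) :
    ∀ u : F ⟶ HF, u ≫ j ≫ pullback.fst p d₀ = i → u ≫ j ≫ pullback.snd p d₀ = i ≫ p ≫ s →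
      FC.Weq u := by
  intro u hu1 hu2
  have sqF : IsPullback i (FC.isTerminal.from F) p (hInit.to B) :=
    IsPullback.of_isLimit hlim.some
  have sqHF : IsPullback j (FC.isTerminal.from HF) (pullback.snd p d₀ ≫ d₁) (hInit.to B) :=
    IsPullback.of_isLimit hlim'.some
  refine FC.weq_of_isPullback_of_weq_over hp (FC.fib_pullbackSnd_comp p hd)
    (FC.weq_pullbackLift_id_comp p hs hd hs₀) ?_ sqF sqHF ?_ (FC.isTerminal.hom_ext _ _)
  · rw [pullback.lift_snd_assoc, Category.assoc, hs₁, Category.comp_id]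
  · apply pullback.hom_ext
    · rw [Category.assoc, hu1, Category.assoc, pullback.lift_fst, Category.comp_id]
    · rw [Category.assoc, hu2, Category.assoc, pullback.lift_snd]
end
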